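/- Let ω > 0 with ω² > 1/16, and let (r, v) : ℝ_{≥0} → ℝ² solve r' = -(ω² v + r/2), v' = r, with (r(0), v(0)) ≠ (0,0). Then liminf_{τ→∞} (∫_0^τ r(s)² ds) / (∫_0^τ v(s)² ds) > 0. -/

import Mathlib

/-!
The energy `r² + ω² v²` decreases at rate `r²`, and `(r + v/2)² + ω² v²` at rate `ω² v²`;
both being nonnegative, `∫₀^τ r²` and `∫₀^τ v²` stay bounded. Both integrals are nondecreasing
in `τ` and, since a nonzero solution has neither `r` nor `v` identically zero on `[0, ∞)`,
eventually bounded below by positive constants. So the ratio is eventually bounded below by a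
positive constant.
-/

open Filter Set intervalIntegral

theorem liminf_div_pos {α : Type*} {l : Filter α} [l.NeBot] {a b : α → ℝ} {a₀ A b₀ B : ℝ}
    (ha₀ : 0 < a₀) (hb₀ : 0 < b₀) (ha₀_le : ∀ᶠ x in l, a₀ ≤ a x) (ha_le : ∀ᶠ x in l, a x ≤ A)
    (hb₀_le : ∀ᶠ x in l, b₀ ≤ b x) (hb_le : ∀ᶠ x in l, b x ≤ B) :
    0 < liminf (fun x => a x / b x) l := by
  obtain ⟨x, hbx₀, hbxB⟩ := (hb₀_le.and hb_le).exists
  have hB : 0 < B := hb₀.trans_le (hbx₀.trans hbxB)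
  have hbdd : ∀ᶠ x in l, a x / b x ≤ A / b₀ := by
    filter_upwards [ha₀_le, ha_le, hb₀_le] with x ha₀x haAx hb₀x
    exact div_le_div₀ (ha₀.le.trans (ha₀x.trans haAx)) haAx hb₀ hb₀x
  refine (div_pos ha₀ hB).trans_le
    (le_liminf_of_le (isCoboundedUnder_ge_of_eventually_le l hbdd) ?_)
  filter_upwards [ha₀_le, hb₀_le, hb_le] with x ha₀x hb₀x hbBx
  exact div_le_div₀ (ha₀.le.trans ha₀x) ha₀x (hb₀.trans_le hb₀x) hbBx

theorem continuousOn_Ici_of_hasDerivAt {f f' : ℝ → ℝ} {a : ℝ}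
    (hf : ∀ t, a ≤ t → HasDerivAt f (f' t) t) : ContinuousOn f (Ici a) :=
  fun t ht => (hf t ht).continuousAt.continuousWithinAt

theorem HasDerivAt.eq_zero_of_eqOn_Ici {f : ℝ → ℝ} {f' a t : ℝ} (hd : HasDerivAt f f' t)
    (hf : EqOn f 0 (Ici a)) (ht : a ≤ t) : f' = 0 :=
  (uniqueDiffOn_Ici a t ht).eq_deriv _ hd.hasDerivWithinAt
    ((hasDerivWithinAt_const t _ 0).congr hf (hf ht))

theorem integral_le_of_hasDerivAt_neg {Φ g : ℝ → ℝ} {a b : ℝ} (hab : a ≤ b)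
    (hΦ : ∀ t ∈ Icc a b, HasDerivAt Φ (-g t) t) (hg : IntervalIntegrable g MeasureTheory.volume a b)
    (hΦb : 0 ≤ Φ b) : ∫ t in a..b, g t ≤ Φ a := by
  have hftc := integral_eq_sub_of_hasDerivAt (f' := fun t => -g t) (by rwa [uIcc_of_le hab]) hg.neg
  rw [integral_neg] at hftc
  linarith

theorem exists_pos_le_integral_sq {f : ℝ → ℝ} {a : ℝ} (hf : ContinuousOn f (Ici a))
    (hne : ∃ t, a ≤ t ∧ f t ≠ 0) : ∃ c > 0, ∀ᶠ τ in atTop, c ≤ ∫ s in a..τ, f s ^ 2 := by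
  obtain ⟨t₀, ht₀, hft₀⟩ := hne
  have hf2 : ContinuousOn (fun s => f s ^ 2) (Ici a) := hf.pow 2
  refine ⟨∫ s in a..t₀ + 1, f s ^ 2, ?_, ?_⟩
  · exact integral_pos (by linarith) (hf2.mono Icc_subset_Ici_self)
      (fun s _ => sq_nonneg _) ⟨t₀, ⟨ht₀, by linarith⟩, by positivity⟩
  · filter_upwards [eventually_ge_atTop (t₀ + 1)] with τ hτ
    exact integral_mono_interval le_rfl (by linarith) hτ
      (Eventually.of_forall fun s => sq_nonneg (f s))
      ((hf2.mono Icc_subset_Ici_self).intervalIntegrable_of_Icc (by linarith))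

section DampedOscillator

variable {ω : ℝ} {r v : ℝ → ℝ}

theorem integral_sq_fst_le (hr : ∀ t, 0 ≤ t → HasDerivAt r (-(ω ^ 2 * v t + r t / 2)) t)
    (hv : ∀ t, 0 ≤ t → HasDerivAt v (r t) t) {τ : ℝ} (hτ : 0 ≤ τ) :
    ∫ s in (0:ℝ)..τ, r s ^ 2 ≤ r 0 ^ 2 + ω ^ 2 * v 0 ^ 2 := by
  refine integral_le_of_hasDerivAt_neg (Φ := fun t => r t ^ 2 + ω ^ 2 * v t ^ 2) hτ
    (fun t ht => ?_) ?_ (by positivity)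
  · exact (((hr t ht.1).pow 2).add (((hv t ht.1).pow 2).const_mul _)).congr_deriv (by ring)
  · exact ((continuousOn_Ici_of_hasDerivAt hr).mono Icc_subset_Ici_self).pow 2
      |>.intervalIntegrable_of_Icc hτ

theorem integral_sq_snd_le (hω : 0 < ω)
    (hr : ∀ t, 0 ≤ t → HasDerivAt r (-(ω ^ 2 * v t + r t / 2)) t)
    (hv : ∀ t, 0 ≤ t → HasDerivAt v (r t) t) {τ : ℝ} (hτ : 0 ≤ τ) :
    ∫ s in (0:ℝ)..τ, v s ^ 2 ≤ ((r 0 + v 0 / 2) ^ 2 + ω ^ 2 * v 0 ^ 2) / ω ^ 2 := by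
  rw [le_div_iff₀ (by positivity), mul_comm, ← integral_const_mul]
  refine integral_le_of_hasDerivAt_neg
    (Φ := fun t => (r t + v t / 2) ^ 2 + ω ^ 2 * v t ^ 2) hτ (fun t ht => ?_) ?_ (by positivity)
  · exact ((((hr t ht.1).fun_add ((hv t ht.1).div_const 2)).pow 2).add
      (((hv t ht.1).pow 2).const_mul _)).congr_deriv (by ring)
  · exact (((continuousOn_Ici_of_hasDerivAt hv).mono Icc_subset_Ici_self).pow 2).const_smul
      (ω ^ 2) |>.intervalIntegrable_of_Icc hτ

end DampedOscillator

theorem stmt4_general (ω : ℝ) (hω : 0 < ω)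
    (r v : ℝ → ℝ)
    (hr : ∀ t, 0 ≤ t → HasDerivAt r (-(ω ^ 2 * v t + r t / 2)) t)
    (hv : ∀ t, 0 ≤ t → HasDerivAt v (r t) t)
    (h0 : ¬(r 0 = 0 ∧ v 0 = 0)) :
    0 < Filter.liminf
      (fun τ : ℝ => (∫ s in (0:ℝ)..τ, (r s) ^ 2) / (∫ s in (0:ℝ)..τ, (v s) ^ 2))
      Filter.atTop := by
  have hr_ne : ∃ t, 0 ≤ t ∧ r t ≠ 0 := by
    by_contra! hr_zero
    have hdr := (hr 0 le_rfl).eq_zero_of_eqOn_Ici hr_zero le_rfl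
    rw [hr_zero 0 le_rfl] at hdr
    exact h0 ⟨hr_zero 0 le_rfl, by simpa [hω.ne'] using hdr⟩
  have hv_ne : ∃ t, 0 ≤ t ∧ v t ≠ 0 := by
    by_contra! hv_zero
    exact h0 ⟨(hv 0 le_rfl).eq_zero_of_eqOn_Ici hv_zero le_rfl, hv_zero 0 le_rfl⟩
  obtain ⟨a₀, ha₀, ha₀_le⟩ := exists_pos_le_integral_sq (continuousOn_Ici_of_hasDerivAt hr) hr_ne
  obtain ⟨b₀, hb₀, hb₀_le⟩ := exists_pos_le_integral_sq (continuousOn_Ici_of_hasDerivAt hv) hv_ne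
  exact liminf_div_pos ha₀ hb₀ ha₀_le
    ((eventually_ge_atTop 0).mono fun τ hτ => integral_sq_fst_le hr hv hτ) hb₀_le
    ((eventually_ge_atTop 0).mono fun τ hτ => integral_sq_snd_le hω hr hv hτ)

/-- STATEMENT 3: Lefevere–Schenkel limiting mode, complex-eigenvalue case `ω² > 1/16`:
the time-averaged ratio of `r²` over `v²` has positive liminf. -/
theorem stmt4 (ω : ℝ) (hω : 0 < ω) (hω2 : ω ^ 2 > 1 / 16)
    (r v : ℝ → ℝ)
    (hr : ∀ t, 0 ≤ t → HasDerivAt r (-(ω ^ 2 * v t + r t / 2)) t)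
    (hv : ∀ t, 0 ≤ t → HasDerivAt v (r t) t)
    (h0 : ¬(r 0 = 0 ∧ v 0 = 0)) :
    0 < Filter.liminf
      (fun τ : ℝ => (∫ s in (0:ℝ)..τ, (r s) ^ 2) / (∫ s in (0:ℝ)..τ, (v s) ^ 2))
      Filter.atTop :=
  stmt4_general ω hω r v hr hv h0
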